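/- Let T₁, T₂ be states (positive trace-one operators) on L²(ℝ). If G_{T₁}(Z) = G_{T₂}(Z) for all Borel Z ⊆ ℝ², then T₁ = T₂, assuming there exists a state S for which G_S is informationally complete (i.e., tr[T G_S(Z)] = tr[T' G_S(Z)] for all Z implies T = T'). -/

import Mathlib

open MeasureTheory

local notation "H" => Lp ℂ 2 (volume : Measure ℝ)

/-! Integrating against every Borel set determines a bounded density almost everywhere, so
`G_{T₁} = G_{T₂}` says that `z ↦ ⟪u, W(z) T₁ W(z)† u⟫` and `z ↦ ⟪u, W(z) T₂ W(z)† u⟫` agree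
almost everywhere, for every `u`. Since `|⟪χ, W(z) φ⟫| = |⟪φ, W(-z) χ⟫|`, the density
`tr[T W(z) S W(z)†]` of `tr[T G_S(·)]` equals `∑ⱼ μⱼ ⟪φⱼ, W(-z) T W(-z)† φⱼ⟫`, so `T₁` and `T₂`
also have the same statistics for `G_S`, and informational completeness of `G_S` gives
`T₁ = T₂`. -/

open Complex ComplexConjugate
open scoped InnerProductSpace

theorem quasiMeasurePreserving_snd_sub {α : Type*} [MeasurableSpace α] (μ : Measure α) [SFinite μ]
    {f : α → ℝ} (hf : Measurable f) :
    Measure.QuasiMeasurePreserving (fun w : α × ℝ => w.2 - f w.1) (μ.prod volume) volume := by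
  have hm : Measurable (fun w : α × ℝ => w.2 - f w.1) := measurable_snd.sub (hf.comp measurable_fst)
  refine ⟨hm, Measure.AbsolutelyContinuous.mk fun N hN hN0 => ?_⟩
  rw [Measure.map_apply hm hN, Measure.prod_apply (hm hN)]
  have hslice (a : α) : volume (Prod.mk a ⁻¹' ((fun w : α × ℝ => w.2 - f w.1) ⁻¹' N)) = 0 :=
    (measurePreserving_sub_right volume (f a)).measure_preimage hN.nullMeasurableSet ▸ hN0
  simp [hslice]

theorem summable_mul_of_nonneg_of_le {ι : Type*} {lam f : ι → ℝ} {C : ℝ} (hlam : ∀ j, 0 ≤ lam j)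
    (hs : Summable lam) (hf0 : ∀ j, 0 ≤ f j) (hfC : ∀ j, f j ≤ C) :
    Summable fun j => lam j * f j :=
  .of_nonneg_of_le (fun j => mul_nonneg (hlam j) (hf0 j))
    (fun j => mul_le_mul_of_nonneg_left (hfC j) (hlam j)) (hs.mul_right C)

theorem tsum_mul_le_of_le {ι : Type*} {lam f : ι → ℝ} {C : ℝ} (hlam : ∀ j, 0 ≤ lam j)
    (h1 : HasSum lam 1) (hf0 : ∀ j, 0 ≤ f j) (hfC : ∀ j, f j ≤ C) : ∑' j, lam j * f j ≤ C :=
  calc ∑' j, lam j * f j ≤ ∑' j, lam j * C :=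
        (summable_mul_of_nonneg_of_le hlam h1.summable hf0 hfC).tsum_le_tsum
          (fun j => mul_le_mul_of_nonneg_left (hfC j) (hlam j)) (h1.summable.mul_right C)
    _ = C := by rw [tsum_mul_right, h1.tsum_eq, one_mul]

theorem tsum_tsum_mul_mul_eq {ι ι' : Type*} {a : ι → ℝ} {b : ι' → ℝ} {c : ι → ι' → ℝ} {C : ℝ}
    (ha : ∀ i, 0 ≤ a i) (hb : ∀ j, 0 ≤ b j) (has : Summable a) (hbs : Summable b)
    (hc0 : ∀ i j, 0 ≤ c i j) (hcC : ∀ i j, c i j ≤ C) :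
    ∑' i, ∑' j, a i * b j * c i j = ∑' j, b j * ∑' i, a i * c i j := by
  have hab : Summable fun p : ι × ι' => a p.1 * b p.2 := has.mul_of_nonneg hbs ha hb
  have habc : Summable (Function.uncurry fun i j => a i * b j * c i j) :=
    summable_mul_of_nonneg_of_le (fun p => mul_nonneg (ha p.1) (hb p.2)) hab
      (fun p => hc0 p.1 p.2) (fun p => hcC p.1 p.2)
  rw [← habc.tsum_comm]
  congr 1 with j
  rw [← tsum_mul_left]
  congr 1 with i
  ring

theorem ae_eq_of_forall_setIntegral_eq_of_bounded {α E : Type*} [MeasurableSpace α]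
    {μ : Measure α} [SigmaFinite μ] [NormedAddCommGroup E] [NormedSpace ℝ E] [CompleteSpace E]
    {f g : α → E} {C : ℝ} (hf : AEStronglyMeasurable f μ) (hg : AEStronglyMeasurable g μ)
    (hfC : ∀ᵐ x ∂μ, ‖f x‖ ≤ C) (hgC : ∀ᵐ x ∂μ, ‖g x‖ ≤ C)
    (hfg : ∀ s, MeasurableSet s → ∫ x in s, f x ∂μ = ∫ x in s, g x ∂μ) : f =ᵐ[μ] g :=
  ae_eq_of_forall_setIntegral_eq_of_sigmaFinite
    (fun _ _ hs => .of_bound hs hf.restrict C (ae_restrict_of_ae hfC))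
    (fun _ _ hs => .of_bound hs hg.restrict C (ae_restrict_of_ae hgC))
    (fun s hs _ => hfg s hs)

def IsWeylRep (W : ℝ × ℝ → (H →L[ℂ] H)) : Prop :=
  ∀ q p : ℝ, ∀ ψ : H, (⇑(W (q, p) ψ) : ℝ → ℂ) =ᵐ[volume]
    fun x => exp (I * (q * p / 2)) * exp (I * (p * x)) * ψ (x - q)

/-- `phaseSpaceDensity W lam ψ u z = ⟪u, W z T (W z)† u⟫` for `T = ∑ j, lam j • |ψ j⟩⟨ψ j|`,
the density of `⟪u, G_T(·) u⟫` with respect to `dz / 2π`. -/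
noncomputable def phaseSpaceDensity (W : ℝ × ℝ → (H →L[ℂ] H)) (lam : ℕ → ℝ) (ψ : ℕ → H) (u : H)
    (z : ℝ × ℝ) : ℝ :=
  ∑' j, lam j * ‖⟪u, W z (ψ j)⟫_ℂ‖ ^ 2

namespace IsWeylRep

variable {W : ℝ × ℝ → (H →L[ℂ] H)}

theorem inner_eq_integral (hW : IsWeylRep W) (u ψ : H) (q p : ℝ) :
    ⟪u, W (q, p) ψ⟫_ℂ
      = ∫ x, conj (u x) * (exp (I * (q * p / 2)) * exp (I * (p * x)) * ψ (x - q)) := by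
  rw [L2.inner_def]
  refine integral_congr_ae ?_
  filter_upwards [hW q p ψ] with x hx
  rw [RCLike.inner_apply, hx, mul_comm]

theorem norm_apply (hW : IsWeylRep W) (ψ : H) (z : ℝ × ℝ) : ‖W z ψ‖ = ‖ψ‖ := by
  obtain ⟨q, p⟩ := z
  rw [Lp.norm_def, Lp.norm_def, eLpNorm_congr_ae (hW q p ψ),
    ← eLpNorm_comp_measurePreserving (Lp.aestronglyMeasurable ψ)
      (measurePreserving_sub_right volume q)]
  congr 1
  refine eLpNorm_congr_norm_ae (ae_of_all _ fun x => ?_)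
  simp [norm_exp]

theorem inner_neg (hW : IsWeylRep W) (u v : H) (q p : ℝ) :
    ⟪v, W (-q, -p) u⟫_ℂ = exp (I * (2 * q * p)) * conj ⟪u, W (q, p) v⟫_ℂ := by
  rw [hW.inner_eq_integral, hW.inner_eq_integral, ← integral_conj, ← integral_const_mul,
    ← integral_sub_right_eq_self _ q]
  refine integral_congr_ae (ae_of_all _ fun x => ?_)
  simp only [map_mul, ← exp_conj, conj_I, conj_ofReal, RingHomCompTriple.comp_apply,
    RingHom.id_apply, map_div₀, map_ofNat, sub_neg_eq_add, sub_add_cancel]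
  have hexp : exp (I * (↑(-q) * ↑(-p) / 2)) * exp (I * (↑(-p) * ↑(x - q)))
      = exp (I * (2 * q * p)) * (exp (-I * (q * p / 2)) * exp (-I * (p * x))) := by
    simp only [← exp_add]
    congr 1
    push_cast
    ring
  rw [hexp]
  ring

theorem norm_inner_neg (hW : IsWeylRep W) (u v : H) (z : ℝ × ℝ) :
    ‖⟪v, W (-z) u⟫_ℂ‖ = ‖⟪u, W z v⟫_ℂ‖ := by
  obtain ⟨q, p⟩ := z
  rw [Prod.neg_mk, hW.inner_neg, norm_mul, Complex.norm_conj, norm_exp]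
  simp

theorem aestronglyMeasurable_inner (hW : IsWeylRep W) (u ψ : H) :
    AEStronglyMeasurable (fun z => ⟪u, W z ψ⟫_ℂ) volume := by
  have hprod : AEStronglyMeasurable (fun w : (ℝ × ℝ) × ℝ =>
      conj (u w.2) * (exp (I * (w.1.1 * w.1.2 / 2)) * exp (I * (w.1.2 * w.2)) * ψ (w.2 - w.1.1)))
      ((volume : Measure (ℝ × ℝ)).prod volume) := by
    refine (continuous_conj.comp_aestronglyMeasurable ?_).mul
      ((Continuous.aestronglyMeasurable (by fun_prop)).mul ?_)
    · exact (Lp.aestronglyMeasurable u).comp_quasiMeasurePreserving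
        Measure.quasiMeasurePreserving_snd
    · exact (Lp.aestronglyMeasurable ψ).comp_quasiMeasurePreserving
        (quasiMeasurePreserving_snd_sub _ measurable_fst)
  refine hprod.integral_prod_right'.congr (ae_of_all _ fun ⟨q, p⟩ => ?_)
  exact (hW.inner_eq_integral u ψ q p).symm

theorem sq_norm_inner_le (hW : IsWeylRep W) (u : H) {ψ : H} (hψ : ‖ψ‖ ≤ 1) (z : ℝ × ℝ) :
    ‖⟪u, W z ψ⟫_ℂ‖ ^ 2 ≤ ‖u‖ ^ 2 := by
  refine pow_le_pow_left₀ (norm_nonneg _) ?_ 2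
  calc ‖⟪u, W z ψ⟫_ℂ‖ ≤ ‖u‖ * ‖W z ψ‖ := norm_inner_le_norm u (W z ψ)
    _ ≤ ‖u‖ := by
      rw [hW.norm_apply]
      exact mul_le_of_le_one_right (norm_nonneg u) hψ

variable {lam : ℕ → ℝ} {ψ : ℕ → H}

theorem aestronglyMeasurable_phaseSpaceDensity (hW : IsWeylRep W) (u : H) :
    AEStronglyMeasurable (phaseSpaceDensity W lam ψ u) volume :=
  .tsum fun j => .const_mul ((hW.aestronglyMeasurable_inner u (ψ j)).norm.pow 2) (lam j)

theorem norm_phaseSpaceDensity_le (hW : IsWeylRep W) (hlam : ∀ j, 0 ≤ lam j)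
    (h1 : HasSum lam 1) (hψ : ∀ j, ‖ψ j‖ ≤ 1) (u : H) (z : ℝ × ℝ) :
    ‖phaseSpaceDensity W lam ψ u z‖ ≤ ‖u‖ ^ 2 := by
  rw [phaseSpaceDensity,
    Real.norm_of_nonneg (tsum_nonneg fun j => mul_nonneg (hlam j) (sq_nonneg _))]
  exact tsum_mul_le_of_le hlam h1 (fun j => sq_nonneg _) fun j => hW.sq_norm_inner_le u (hψ j) z

theorem tsum_tsum_eq_tsum_phaseSpaceDensity_neg (hW : IsWeylRep W) {μ : ℕ → ℝ} {φ : ℕ → H}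
    (hlam : ∀ i, 0 ≤ lam i) (hμ : ∀ j, 0 ≤ μ j) (hlams : Summable lam) (hμs : Summable μ)
    (hψ : ∀ i, ‖ψ i‖ ≤ 1) (hφ : ∀ j, ‖φ j‖ ≤ 1) (z : ℝ × ℝ) :
    ∑' i, ∑' j, lam i * μ j * ‖⟪ψ i, W z (φ j)⟫_ℂ‖ ^ 2
      = ∑' j, μ j * phaseSpaceDensity W lam ψ (φ j) (-z) := by
  have hbound (i j : ℕ) : ‖⟪ψ i, W z (φ j)⟫_ℂ‖ ^ 2 ≤ 1 :=
    (hW.sq_norm_inner_le (ψ i) (hφ j) z).trans (pow_le_one₀ (norm_nonneg _) (hψ i))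
  rw [tsum_tsum_mul_mul_eq hlam hμ hlams hμs (fun _ _ => sq_nonneg _) hbound]
  simp only [phaseSpaceDensity, hW.norm_inner_neg]

end IsWeylRep

theorem stmt7
    (W : ℝ × ℝ → (H →L[ℂ] H))
    (hW : ∀ q p : ℝ, ∀ ψ : H,
      (⇑(W (q, p) ψ) : ℝ → ℂ) =ᵐ[volume]
        fun x => Complex.exp (Complex.I * (q * p / 2)) * Complex.exp (Complex.I * (p * x))
          * ψ (x - q))
    (lam₁ lam₂ μ : ℕ → ℝ) (ψ₁ ψ₂ φ : ℕ → H)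
    (hlam₁ : ∀ i, 0 ≤ lam₁ i) (hlam₂ : ∀ i, 0 ≤ lam₂ i) (hμ : ∀ i, 0 ≤ μ i)
    (h₁1 : HasSum lam₁ 1) (h₂1 : HasSum lam₂ 1) (hμ1 : HasSum μ 1)
    (ho₁ : Orthonormal ℂ ψ₁) (ho₂ : Orthonormal ℂ ψ₂) (hoφ : Orthonormal ℂ φ)
    -- informational completeness of `G_S`:
    (hIC : ∀ (κ κ' : ℕ → ℝ) (χ χ' : ℕ → H),
      (∀ i, 0 ≤ κ i) → (∀ i, 0 ≤ κ' i) → HasSum κ 1 → HasSum κ' 1 →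
      Orthonormal ℂ χ → Orthonormal ℂ χ' →
      (∀ Z : Set (ℝ × ℝ), MeasurableSet Z →
        (1 / (2 * Real.pi)) *
            ∫ z in Z, ∑' i, ∑' j, κ i * μ j * ‖(inner ℂ (χ i) (W z (φ j)) : ℂ)‖ ^ 2
              ∂(volume : Measure (ℝ × ℝ))
          = (1 / (2 * Real.pi)) *
            ∫ z in Z, ∑' i, ∑' j, κ' i * μ j * ‖(inner ℂ (χ' i) (W z (φ j)) : ℂ)‖ ^ 2
              ∂(volume : Measure (ℝ × ℝ))) →
      ∀ u v : H, ∑' i, (κ i : ℂ) * ((inner ℂ u (χ i) : ℂ) * (inner ℂ (χ i) v : ℂ))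
        = ∑' i, (κ' i : ℂ) * ((inner ℂ u (χ' i) : ℂ) * (inner ℂ (χ' i) v : ℂ)))
    -- `G_{T₁} = G_{T₂}`:
    (h : ∀ Z : Set (ℝ × ℝ), MeasurableSet Z → ∀ u : H,
      (1 / (2 * Real.pi)) *
          ∫ z in Z, ∑' j, lam₁ j * ‖(inner ℂ u (W z (ψ₁ j)) : ℂ)‖ ^ 2
            ∂(volume : Measure (ℝ × ℝ))
        = (1 / (2 * Real.pi)) *
          ∫ z in Z, ∑' j, lam₂ j * ‖(inner ℂ u (W z (ψ₂ j)) : ℂ)‖ ^ 2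
            ∂(volume : Measure (ℝ × ℝ))) :
    -- conclusion: `T₁ = T₂`
    ∀ u v : H, ∑' i, (lam₁ i : ℂ) * ((inner ℂ u (ψ₁ i) : ℂ) * (inner ℂ (ψ₁ i) v : ℂ))
      = ∑' i, (lam₂ i : ℂ) * ((inner ℂ u (ψ₂ i) : ℂ) * (inner ℂ (ψ₂ i) v : ℂ)) := by
  replace hW : IsWeylRep W := hW
  have hdens (u : H) :
      phaseSpaceDensity W lam₁ ψ₁ u =ᵐ[volume] phaseSpaceDensity W lam₂ ψ₂ u :=
    ae_eq_of_forall_setIntegral_eq_of_bounded (hW.aestronglyMeasurable_phaseSpaceDensity u)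
      (hW.aestronglyMeasurable_phaseSpaceDensity u)
      (ae_of_all _ (hW.norm_phaseSpaceDensity_le hlam₁ h₁1 (fun j => (ho₁.1 j).le) u))
      (ae_of_all _ (hW.norm_phaseSpaceDensity_le hlam₂ h₂1 (fun j => (ho₂.1 j).le) u))
      fun Z hZ => mul_left_cancel₀ (by positivity) (h Z hZ u)
  have hdens_neg : ∀ᵐ z ∂volume, ∀ j, phaseSpaceDensity W lam₁ ψ₁ (φ j) (-z)
      = phaseSpaceDensity W lam₂ ψ₂ (φ j) (-z) :=
    (Measure.measurePreserving_neg volume).quasiMeasurePreserving.ae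
      (ae_all_iff.2 fun j => hdens (φ j))
  refine hIC lam₁ lam₂ ψ₁ ψ₂ hlam₁ hlam₂ h₁1 h₂1 ho₁ ho₂ fun Z _ => ?_
  congr 1
  refine integral_congr_ae (ae_restrict_of_ae ?_)
  filter_upwards [hdens_neg] with z hz
  rw [hW.tsum_tsum_eq_tsum_phaseSpaceDensity_neg hlam₁ hμ h₁1.summable hμ1.summable
      (fun i => (ho₁.1 i).le) (fun j => (hoφ.1 j).le),
    hW.tsum_tsum_eq_tsum_phaseSpaceDensity_neg hlam₂ hμ h₂1.summable hμ1.summable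
      (fun i => (ho₂.1 i).le) (fun j => (hoφ.1 j).le)]
  simp only [hz]
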